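/- Let γ : ℝ → EuclideanSpace ℝ (Fin 3) be a smooth unit-speed curve, closed with period ℓ > 0, with nowhere-vanishing curvature κ(t) = ‖γ''(t)‖ > 0. If the total torsion satisfies ∫₀^ℓ τ(t) dt = 2πn for some integer n, where τ(t) = ⟨γ'(t) ×₃ γ''(t), γ'''(t)⟩ / ‖γ''(t)‖², then there exists a smooth map N : ℝ → EuclideanSpace ℝ (Fin 3) with N(t + ℓ) = N(t), ‖N(t)‖ = 1, ⟨N(t), γ'(t)⟩ = 0 for all t, and such that for every t the vector N'(t) is a scalar multiple of γ'(t); that is, γ can appear as a line of curvature of an oriented surface. -/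

import Mathlib

open scoped RealInnerProductSpace

/-- The torsion of a unit-speed curve in `ℝ³` with nowhere-vanishing curvature:
`τ(t) = ⟨γ'(t) ×₃ γ''(t), γ'''(t)⟩ / ‖γ''(t)‖²`. -/
noncomputable def torsion3 (γ : ℝ → EuclideanSpace ℝ (Fin 3)) (t : ℝ) : ℝ :=
  (inner ℝ ((WithLp.equiv 2 (Fin 3 → ℝ)).symm
      (crossProduct (WithLp.equiv 2 (Fin 3 → ℝ) (deriv γ t))
        (WithLp.equiv 2 (Fin 3 → ℝ) (deriv (deriv γ) t))))
    (deriv (deriv (deriv γ)) t) : ℝ) / ‖deriv (deriv γ) t‖ ^ 2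

/-!
Let `T = γ'`, let `n` be the principal normal and `b = T ×₃ n`. A unit normal field
`N = cos θ • n + sin θ • b` satisfies Rodrigues' equation exactly when `N'` is orthogonal to
`T ×₃ N`, and `⟪N', T ×₃ N⟫ = θ' + ⟪n', b⟫ = θ' + τ`. Hence `θ(t) = -∫₀ᵗ τ` works, and the
resulting `N` is closed because the total torsion lies in `2πℤ`.
-/

open Real Function WithLp Matrix
open scoped ContDiff

local notation "E³" => EuclideanSpace ℝ (Fin 3)

noncomputable def cross3 (x y : E³) : E³ := toLp 2 (ofLp x ⨯₃ ofLp y)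

local infixl:74 " ×₃ " => cross3

theorem torsion3_eq (γ : ℝ → E³) (t : ℝ) :
    torsion3 γ t = ⟪deriv γ t ×₃ deriv (deriv γ) t, deriv (deriv (deriv γ)) t⟫ /
      ‖deriv (deriv γ) t‖ ^ 2 := rfl

section CrossProduct

theorem EuclideanSpace.real_inner_eq_dotProduct {ι : Type*} [Fintype ι]
    (x y : EuclideanSpace ℝ ι) : ⟪x, y⟫ = ofLp x ⬝ᵥ ofLp y := by
  simp [EuclideanSpace.inner_eq_star_dotProduct, dotProduct_comm]

theorem inner_cross3_self_left (x y : E³) : ⟪x ×₃ y, x⟫ = 0 := by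
  rw [EuclideanSpace.real_inner_eq_dotProduct, dotProduct_comm]; exact dot_self_cross _ _

theorem inner_cross3_self_right (x y : E³) : ⟪x ×₃ y, y⟫ = 0 := by
  rw [EuclideanSpace.real_inner_eq_dotProduct, dotProduct_comm]; exact dot_cross_self _ _

theorem cross3_add_right (x y z : E³) : x ×₃ (y + z) = x ×₃ y + x ×₃ z := by
  simp [cross3]

theorem cross3_smul_right (c : ℝ) (x y : E³) : x ×₃ (c • y) = c • (x ×₃ y) := by
  simp [cross3]

theorem cross3_cross3 (x y z : E³) : x ×₃ (y ×₃ z) = ⟪x, z⟫ • y - ⟪x, y⟫ • z := by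
  simp [cross3, EuclideanSpace.real_inner_eq_dotProduct, cross_cross_eq_smul_sub_smul',
    dotProduct_comm (ofLp y)]

theorem inner_cross3_cross3 (x y z w : E³) :
    ⟪x ×₃ y, z ×₃ w⟫ = ⟪x, z⟫ * ⟪y, w⟫ - ⟪x, w⟫ * ⟪y, z⟫ := by
  simp [EuclideanSpace.real_inner_eq_dotProduct, cross3, cross_dot_cross]

theorem norm_cross3_of_inner_eq_zero {x y : E³} (h : ⟪x, y⟫ = 0) : ‖x ×₃ y‖ = ‖x‖ * ‖y‖ := by
  rw [cross3, InnerProductGeometry.norm_ofLp_crossProduct,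
    (InnerProductGeometry.inner_eq_zero_iff_angle_eq_pi_div_two x y).mp h, sin_pi_div_two,
    mul_one]

theorem ContDiff.cross3 {E : Type*} [NormedAddCommGroup E] [NormedSpace ℝ E]
    {n : WithTop ℕ∞} {f g : E → E³} (hf : ContDiff ℝ n f) (hg : ContDiff ℝ n g) :
    ContDiff ℝ n fun t => f t ×₃ g t := by
  rw [contDiff_euclidean] at hf hg ⊢
  intro i
  fin_cases i <;> simp [_root_.cross3, cross_apply] <;> fun_prop

theorem cross3_cos_smul_add_sin_smul {T n : E³} (hT : ‖T‖ = 1) (hTn : ⟪T, n⟫ = 0) (θ : ℝ) :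
    T ×₃ (cos θ • n + sin θ • (T ×₃ n)) = cos θ • (T ×₃ n) - sin θ • n := by
  simp only [cross3_add_right, cross3_smul_right, cross3_cross3, hTn, real_inner_self_eq_norm_sq,
    hT, zero_smul, one_pow, one_smul]
  module

theorem eq_zero_of_inner_cross3_eq_zero {x y w : E³} (hxy : x ×₃ y ≠ 0) (hx : ⟪w, x⟫ = 0)
    (hy : ⟪w, y⟫ = 0) (hw : ⟪w, x ×₃ y⟫ = 0) : w = 0 := by
  have hcross : w ×₃ (x ×₃ y) = 0 := by
    rw [cross3_cross3, hx, hy, zero_smul, zero_smul, sub_zero]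
  have h := inner_cross3_cross3 w (x ×₃ y) w (x ×₃ y)
  rw [hcross, inner_zero_left, hw, zero_mul, sub_zero, eq_comm, mul_eq_zero] at h
  exact inner_self_eq_zero.mp (h.resolve_right (inner_self_ne_zero.mpr hxy))

theorem eq_inner_smul_of_inner_eq_zero {T N v : E³} (hT : ‖T‖ = 1) (hN : ‖N‖ = 1)
    (hNT : ⟪N, T⟫ = 0) (hvN : ⟪v, N⟫ = 0) (hvTN : ⟪v, T ×₃ N⟫ = 0) : v = ⟪v, T⟫ • T := by
  have hTN : ⟪T, N⟫ = 0 := by rwa [real_inner_comm]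
  have hT_TN : ⟪T, T ×₃ N⟫ = 0 := by rw [real_inner_comm, inner_cross3_self_left]
  have hTN_ne : T ×₃ N ≠ 0 := by
    rw [← norm_ne_zero_iff, norm_cross3_of_inner_eq_zero hTN, hT, hN]
    norm_num
  refine sub_eq_zero.mp (eq_zero_of_inner_cross3_eq_zero hTN_ne ?_ ?_ ?_) <;>
    simp only [inner_sub_left, real_inner_smul_left, real_inner_self_eq_norm_sq, hT, hTN, hT_TN,
      hvN, hvTN] <;> ring

end CrossProduct

section Rotation

variable {F : Type*} [NormedAddCommGroup F] [InnerProductSpace ℝ F]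

theorem HasDerivAt.inner_add_inner_eq_zero {f g : ℝ → F} {f' g' : F} {t c : ℝ}
    (hf : HasDerivAt f f' t) (hg : HasDerivAt g g' t) (h : ∀ s, ⟪f s, g s⟫ = c) :
    ⟪f t, g'⟫ + ⟪f', g t⟫ = 0 := by
  have hconst : (fun s => ⟪f s, g s⟫) = fun _ => c := funext h
  have hderiv := hf.inner ℝ hg
  rw [hconst] at hderiv
  exact hderiv.unique (hasDerivAt_const t c)

theorem HasDerivAt.inner_eq_zero_of_norm_const {f : ℝ → F} {f' : F} {t c : ℝ}
    (hf : HasDerivAt f f' t) (h : ∀ s, ‖f s‖ = c) : ⟪f', f t⟫ = 0 := by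
  have hsum := hf.inner_add_inner_eq_zero hf fun s => by rw [real_inner_self_eq_norm_sq, h]
  rwa [real_inner_comm, ← two_mul, mul_eq_zero, or_iff_right two_ne_zero] at hsum

theorem norm_cos_smul_add_sin_smul {e₁ e₂ : F} (he₁ : ‖e₁‖ = 1) (he₂ : ‖e₂‖ = 1)
    (he₁₂ : ⟪e₁, e₂⟫ = 0) (θ : ℝ) : ‖cos θ • e₁ + sin θ • e₂‖ = 1 := by
  refine (pow_left_inj₀ (norm_nonneg _) zero_le_one two_ne_zero).mp ?_
  rw [norm_add_sq_real, real_inner_smul_left, real_inner_smul_right, he₁₂, norm_smul, norm_smul,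
    he₁, he₂, Real.norm_eq_abs, Real.norm_eq_abs]
  simp

/-- Rotating an orthonormal pair `e₁, e₂` by the angle `θ` adds `θ'` to the connection form
`⟪e₁', e₂⟫`. -/
theorem inner_deriv_cos_smul_add_sin_smul {e₁ e₂ : ℝ → F} {θ : ℝ → ℝ} {e₁' e₂' : F}
    {θ' t : ℝ} (h₁ : HasDerivAt e₁ e₁' t) (h₂ : HasDerivAt e₂ e₂' t) (hθ : HasDerivAt θ θ' t)
    (he₁ : ∀ s, ‖e₁ s‖ = 1) (he₂ : ∀ s, ‖e₂ s‖ = 1) (he₁₂ : ∀ s, ⟪e₁ s, e₂ s⟫ = 0) :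
    ⟪deriv (fun s => cos (θ s) • e₁ s + sin (θ s) • e₂ s) t,
      cos (θ t) • e₂ t - sin (θ t) • e₁ t⟫ = θ' + ⟪e₁', e₂ t⟫ := by
  have h11 := h₁.inner_eq_zero_of_norm_const he₁
  have h22 := h₂.inner_eq_zero_of_norm_const he₂
  have h12 := h₁.inner_add_inner_eq_zero h₂ he₁₂
  rw [real_inner_comm e₂' (e₁ t)] at h12
  have hN : HasDerivAt (fun s => cos (θ s) • e₁ s + sin (θ s) • e₂ s)
      (cos (θ t) • e₁' + (-sin (θ t) * θ') • e₁ t +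
        (sin (θ t) • e₂' + (cos (θ t) * θ') • e₂ t)) t :=
    (hθ.cos.smul h₁).add (hθ.sin.smul h₂)
  rw [hN.deriv]
  simp only [inner_add_left, inner_sub_right, real_inner_smul_left, real_inner_smul_right,
    real_inner_self_eq_norm_sq, he₁, he₂, he₁₂ t, real_inner_comm (e₁ t) (e₂ t), h11, h22]
  linear_combination (θ' + ⟪e₁', e₂ t⟫) * sin_sq_add_cos_sq (θ t) - sin (θ t) ^ 2 * h12

end Rotation

theorem Function.Periodic.deriv {𝕜 F : Type*} [NontriviallyNormedField 𝕜]
    [NormedAddCommGroup F] [NormedSpace 𝕜 F] {f : 𝕜 → F} {c : 𝕜} (h : Periodic f c) :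
    Periodic (deriv f) c := fun t => by
  rw [← deriv_comp_add_const, h.funext]

theorem Function.Periodic.exists_contDiff_primitive {f : ℝ → ℝ} {c : ℝ} (hper : Periodic f c)
    (hf : ContDiff ℝ ∞ f) :
    ∃ g : ℝ → ℝ, ContDiff ℝ ∞ g ∧ (∀ t, HasDerivAt g (f t) t) ∧
      ∀ t, g (t + c) = g t + ∫ s in (0 : ℝ)..c, f s := by
  have hderiv : ∀ t, HasDerivAt (fun u => ∫ s in (0 : ℝ)..u, f s) (f t) t := fun t =>
    hf.continuous.integral_hasStrictDerivAt 0 t |>.hasDerivAt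
  refine ⟨fun u => ∫ s in (0 : ℝ)..u, f s, ?_, hderiv, fun t => ?_⟩
  · rw [contDiff_infty_iff_deriv]
    refine ⟨fun t => (hderiv t).differentiableAt, ?_⟩
    rwa [funext fun t => (hderiv t).deriv]
  · simpa using
      hper.intervalIntegral_add_eq_add 0 t fun _ _ => hf.continuous.intervalIntegrable _ _

theorem exists_parallel_unit_normal {T n : ℝ → E³} {ℓ : ℝ} (hT : ContDiff ℝ ∞ T)
    (hn : ContDiff ℝ ∞ n) (hTper : Periodic T ℓ) (hnper : Periodic n ℓ)
    (hTunit : ∀ t, ‖T t‖ = 1) (hnunit : ∀ t, ‖n t‖ = 1) (hnT : ∀ t, ⟪n t, T t⟫ = 0) (k : ℤ)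
    (htwist : ∫ t in (0 : ℝ)..ℓ, ⟪deriv n t, T t ×₃ n t⟫ = 2 * π * k) :
    ∃ N : ℝ → E³, ContDiff ℝ ∞ N ∧ Periodic N ℓ ∧ (∀ t, ‖N t‖ = 1) ∧
      (∀ t, ⟪N t, T t⟫ = 0) ∧ ∀ t, ∃ c : ℝ, deriv N t = c • T t := by
  set b : ℝ → E³ := fun t => T t ×₃ n t
  have hb : ContDiff ℝ ∞ b := hT.cross3 hn
  have hn' : ContDiff ℝ ∞ (deriv n) := (contDiff_infty_iff_deriv.mp hn).2
  have hTn : ∀ t, ⟪T t, n t⟫ = 0 := fun t => by rw [real_inner_comm, hnT]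
  have hbunit : ∀ t, ‖b t‖ = 1 := fun t => by
    rw [norm_cross3_of_inner_eq_zero (hTn t), hTunit, hnunit, one_mul]
  have hnb : ∀ t, ⟪n t, b t⟫ = 0 := fun t => by rw [real_inner_comm, inner_cross3_self_right]
  have hper : Periodic (fun t => -⟪deriv n t, b t⟫) ℓ := fun t => by
    simp only [b, hnper.deriv t, hTper t, hnper t]
  obtain ⟨θ, hθ, hθ', hθper⟩ := hper.exists_contDiff_primitive (hn'.inner ℝ hb).neg
  rw [intervalIntegral.integral_neg, htwist] at hθper
  set N : ℝ → E³ := fun t => cos (θ t) • n t + sin (θ t) • b t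
  have hNunit : ∀ t, ‖N t‖ = 1 := fun t =>
    norm_cos_smul_add_sin_smul (hnunit t) (hbunit t) (hnb t) _
  have hNT : ∀ t, ⟪N t, T t⟫ = 0 := fun t => by
    simp only [N, b, inner_add_left, real_inner_smul_left, hnT, inner_cross3_self_left,
      mul_zero, add_zero]
  have hNsmooth : ContDiff ℝ ∞ N :=
    (contDiff_cos.comp hθ).smul hn |>.add ((contDiff_sin.comp hθ).smul hb)
  refine ⟨N, hNsmooth, fun t => ?_, hNunit, hNT, fun t =>
    ⟨_, eq_inner_smul_of_inner_eq_zero (hTunit t) (hNunit t) (hNT t) ?_ ?_⟩⟩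
  · have hθshift : θ (t + ℓ) = θ t - (k : ℝ) * (2 * π) := by rw [hθper]; ring
    simp only [N, b, hθshift, cos_sub_int_mul_two_pi, sin_sub_int_mul_two_pi, hnper t, hTper t]
  · have hN' : HasDerivAt N (deriv N t) t := (hNsmooth.differentiable (by simp) t).hasDerivAt
    exact hN'.inner_eq_zero_of_norm_const hNunit
  · rw [cross3_cos_smul_add_sin_smul (hTunit t) (hTn t),
      inner_deriv_cos_smul_add_sin_smul (hn.differentiable (by simp) t).hasDerivAt
        (hb.differentiable (by simp) t).hasDerivAt (hθ' t) hnunit hbunit hnb, neg_add_cancel]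

section PrincipalNormal

variable {F : Type*} [NormedAddCommGroup F] [NormedSpace ℝ F] {γ : ℝ → F} {t : ℝ}

noncomputable def principalNormal (γ : ℝ → F) (t : ℝ) : F :=
  ‖deriv (deriv γ) t‖⁻¹ • deriv (deriv γ) t

theorem norm_principalNormal (h : deriv (deriv γ) t ≠ 0) : ‖principalNormal γ t‖ = 1 :=
  norm_smul_inv_norm h

theorem Function.Periodic.principalNormal {ℓ : ℝ} (h : Periodic γ ℓ) :
    Periodic (principalNormal γ) ℓ := fun t => by
  simp only [_root_.principalNormal, h.deriv.deriv t]

theorem inner_principalNormal_deriv {G : Type*} [NormedAddCommGroup G] [InnerProductSpace ℝ G]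
    {γ : ℝ → G} {t : ℝ} (hγ : DifferentiableAt ℝ (deriv γ) t)
    (hunit : ∀ s, ‖deriv γ s‖ = 1) : ⟪principalNormal γ t, deriv γ t⟫ = 0 := by
  rw [principalNormal, real_inner_smul_left, hγ.hasDerivAt.inner_eq_zero_of_norm_const hunit,
    mul_zero]

theorem ContDiff.principalNormal {G : Type*} [NormedAddCommGroup G] [InnerProductSpace ℝ G]
    {γ : ℝ → G} (hγ : ContDiff ℝ ∞ γ) (h : ∀ t, deriv (deriv γ) t ≠ 0) :
    ContDiff ℝ ∞ (principalNormal γ) := by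
  have hA : ContDiff ℝ ∞ (deriv (deriv γ)) :=
    (contDiff_infty_iff_deriv.mp (contDiff_infty_iff_deriv.mp hγ).2).2
  exact ((hA.norm ℝ h).inv fun t => norm_ne_zero_iff.mpr (h t)).smul hA

end PrincipalNormal

theorem inner_deriv_principalNormal_cross3 {γ : ℝ → E³} {t : ℝ}
    (hA : DifferentiableAt ℝ (deriv (deriv γ)) t) (h : deriv (deriv γ) t ≠ 0) :
    ⟪deriv (principalNormal γ) t, deriv γ t ×₃ principalNormal γ t⟫ = torsion3 γ t := by
  have hκ : ‖deriv (deriv γ) t‖ ≠ 0 := norm_ne_zero_iff.mpr h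
  have hn : HasDerivAt (principalNormal γ) (‖deriv (deriv γ) t‖⁻¹ • deriv (deriv (deriv γ)) t +
      deriv (fun s => ‖deriv (deriv γ) s‖⁻¹) t • deriv (deriv γ) t) t :=
    ((hA.norm ℝ h).inv hκ).hasDerivAt.smul hA.hasDerivAt
  rw [hn.deriv, torsion3_eq, principalNormal, cross3_smul_right]
  have hAA : ⟪deriv (deriv γ) t, deriv γ t ×₃ deriv (deriv γ) t⟫ = 0 := by
    rw [real_inner_comm, inner_cross3_self_right]
  simp only [inner_add_left, real_inner_smul_left, real_inner_smul_right, hAA, mul_zero, add_zero,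
    real_inner_comm (deriv (deriv (deriv γ)) t)]
  field_simp

theorem exists_line_of_curvature_of_total_torsion_multiple_general
    (γ : ℝ → EuclideanSpace ℝ (Fin 3)) (ℓ : ℝ)
    (hsmooth : ContDiff ℝ (⊤ : ℕ∞) γ)
    (hunit : ∀ t, ‖deriv γ t‖ = 1)
    (hclosed : ∀ t, γ (t + ℓ) = γ t)
    (hcurv : ∀ t, ‖deriv (deriv γ) t‖ > 0)
    (n : ℤ)
    (htorsion : ∫ t in (0:ℝ)..ℓ, torsion3 γ t = 2 * Real.pi * n) :
    ∃ N : ℝ → EuclideanSpace ℝ (Fin 3),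
      ContDiff ℝ (⊤ : ℕ∞) N ∧
      (∀ t, N (t + ℓ) = N t) ∧
      (∀ t, ‖N t‖ = 1) ∧
      (∀ t, ⟪N t, deriv γ t⟫ = 0) ∧
      (∀ t, ∃ c : ℝ, deriv N t = c • deriv γ t) := by
  have hT : ContDiff ℝ ∞ (deriv γ) := (contDiff_infty_iff_deriv.mp hsmooth).2
  have hA : ContDiff ℝ ∞ (deriv (deriv γ)) := (contDiff_infty_iff_deriv.mp hT).2
  have hA0 : ∀ t, deriv (deriv γ) t ≠ 0 := fun t => norm_pos_iff.mp (hcurv t)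
  have hper : Periodic γ ℓ := hclosed
  refine exists_parallel_unit_normal hT (hsmooth.principalNormal hA0) hper.deriv
    hper.principalNormal hunit (fun t => norm_principalNormal (hA0 t))
    (fun t => inner_principalNormal_deriv (hT.differentiable (by simp) t) hunit) n ?_
  simpa only [inner_deriv_principalNormal_cross3 (hA.differentiable (by simp) _) (hA0 _)]
    using htorsion

/-- If the total torsion of a closed curve in `ℝ³` is an integer multiple of `2π`,
then it can appear as a line of curvature of an oriented surface. -/
theorem exists_line_of_curvature_of_total_torsion_multiple
    (γ : ℝ → EuclideanSpace ℝ (Fin 3)) (ℓ : ℝ) (hℓ : 0 < ℓ)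
    (hsmooth : ContDiff ℝ (⊤ : ℕ∞) γ)
    (hunit : ∀ t, ‖deriv γ t‖ = 1)
    (hclosed : ∀ t, γ (t + ℓ) = γ t)
    (hcurv : ∀ t, ‖deriv (deriv γ) t‖ > 0)
    (n : ℤ)
    (htorsion : ∫ t in (0:ℝ)..ℓ, torsion3 γ t = 2 * Real.pi * n) :
    ∃ N : ℝ → EuclideanSpace ℝ (Fin 3),
      ContDiff ℝ (⊤ : ℕ∞) N ∧
      (∀ t, N (t + ℓ) = N t) ∧
      (∀ t, ‖N t‖ = 1) ∧
      (∀ t, ⟪N t, deriv γ t⟫ = 0) ∧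
      (∀ t, ∃ c : ℝ, deriv N t = c • deriv γ t) :=
  exists_line_of_curvature_of_total_torsion_multiple_general γ ℓ hsmooth hunit hclosed hcurv n
    htorsion
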